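/- arXiv:2007.14256 — 2 statements merged into one kernel-verified Lean document; each statement's English description precedes it below -/
import Mathlib

section
/- Consider the dynamical system on ℝᵐ given by (G(x,ẋ) + Ξ_G(x,ẋ)) ẍ + ξ_G(x,ẋ) = −∇Φ(x) − B(x,ẋ)ẋ, where Ξ_G(x,ẋ) = ½ Σᵢ ẋᵢ ∂_ẋ gᵢ(x,ẋ) and ξ_G(x,ẋ) = Ġˣ(x,ẋ)ẋ − ½∇ₓ(ẋᵀG(x,ẋ)ẋ). Define V(x,ẋ) = ½ ẋᵀ G(x,ẋ) ẋ + Φ(x). Then along any C² solution trajectory, d/dt V(x(t), ẋ(t)) = −ẋᵀ B(x,ẋ) ẋ. -/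
open Matrix BigOperators

/-- Partial derivative of a scalar function on `ℝᵐ` in the `k`-th coordinate direction. -/
noncomputable def pder {m : ℕ} (f : (Fin m → ℝ) → ℝ) (x : Fin m → ℝ) (k : Fin m) : ℝ :=
  fderiv ℝ f x (Pi.single k 1)

/-- The curvature correction matrix Ξ_G(x,ẋ) = ½ Σᵢ ẋᵢ ∂_ẋ gᵢ(x,ẋ), where gᵢ is the
`i`-th column of `G` and the derivative is in the velocity variable. -/
noncomputable def XiG {m : ℕ} (G : (Fin m → ℝ) → (Fin m → ℝ) → Matrix (Fin m) (Fin m) ℝ)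
    (x v : Fin m → ℝ) : Matrix (Fin m) (Fin m) ℝ :=
  Matrix.of fun j k => (1 / 2) * ∑ i, v i * pder (fun w => G x w j i) v k

/-- The curvature vector ξ_G(x,ẋ) = Ġˣ(x,ẋ)ẋ − ½∇ₓ(ẋᵀG(x,ẋ)ẋ). -/
noncomputable def xiG {m : ℕ} (G : (Fin m → ℝ) → (Fin m → ℝ) → Matrix (Fin m) (Fin m) ℝ)
    (x v : Fin m → ℝ) : Fin m → ℝ := fun i =>
  (∑ j, (∑ k, v k * pder (fun y => G y v i j) x k) * v j)
    - (1 / 2) * pder (fun y => v ⬝ᵥ (G y v).mulVec v) x i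

/-!
With `v = ẋ` and `a = ẍ`, the product and chain rules and the symmetry of `G` give
`d/dt (vᵀ G v) = 2 vᵀ G a + vᵀ (Ġˣ + ∂ᵥG[a]) v`. The correction terms are built so that
`vᵀ Ξ_G a = ½ vᵀ ∂ᵥG[a] v` and `vᵀ ξ_G = ½ vᵀ Ġˣ v` (because `vᵀ ∇ₓ(vᵀ G v) = vᵀ Ġˣ v`), so half
of that derivative is exactly the power `vᵀ ((G + Ξ_G) a + ξ_G)` of the inertial terms. The
equation of motion turns this into `-vᵀ ∇Φ - vᵀ B v`, and `d/dt Φ(x) = vᵀ ∇Φ` cancels the first term.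
-/

section Calculus

variable {E F H : Type*} [NormedAddCommGroup E] [NormedSpace ℝ E] [NormedAddCommGroup F]
  [NormedSpace ℝ F] [NormedAddCommGroup H] [NormedSpace ℝ H]

theorem hasDerivAt_comp_prodMk {f : E × F → H} {x : ℝ → E} {v : ℝ → F} {x' : E} {v' : F} {t : ℝ}
    (hf : DifferentiableAt ℝ f (x t, v t)) (hx : HasDerivAt x x' t) (hv : HasDerivAt v v' t) :
    HasDerivAt (fun s => f (x s, v s))
      (fderiv ℝ (fun y => f (y, v t)) (x t) x' + fderiv ℝ (fun w => f (x t, w)) (v t) v') t := by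
  have hfst : HasFDerivAt (fun y => f (y, v t)) _ (x t) :=
    hf.hasFDerivAt.comp (x t) (hasFDerivAt_prodMk_left (𝕜 := ℝ) (x t) (v t))
  have hsnd : HasFDerivAt (fun w => f (x t, w)) _ (v t) :=
    hf.hasFDerivAt.comp (v t) (hasFDerivAt_prodMk_right (𝕜 := ℝ) (x t) (v t))
  rw [hfst.fderiv, hsnd.fderiv]
  refine (hf.hasFDerivAt.comp_hasDerivAt t (hx.prodMk hv)).congr_deriv ?_
  rw [ContinuousLinearMap.comp_apply, ContinuousLinearMap.comp_apply, ← map_add]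
  simp

theorem fderiv_apply_eq_sum_pder {m : ℕ} (f : (Fin m → ℝ) → ℝ) (x u : Fin m → ℝ) :
    fderiv ℝ f x u = ∑ k, u k * pder f x k := by
  conv_lhs => rw [← Finset.univ_sum_single u]
  refine (map_sum _ _ _).trans (Finset.sum_congr rfl fun k _ => ?_)
  rw [pder, ← smul_eq_mul, ← map_smul, ← Pi.single_smul, smul_eq_mul, mul_one]

end Calculus

section QuadraticForm

variable {ι κ E : Type*} [Fintype ι] [Fintype κ] [NormedAddCommGroup E] [NormedSpace ℝ E]

theorem HasDerivAt.dotProduct_mulVec {u : ℝ → ι → ℝ} {M : ℝ → Matrix ι κ ℝ} {w : ℝ → κ → ℝ}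
    {u' : ι → ℝ} {M' : Matrix ι κ ℝ} {w' : κ → ℝ} {t : ℝ} (hu : HasDerivAt u u' t)
    (hM : ∀ i j, HasDerivAt (fun s => M s i j) (M' i j) t) (hw : HasDerivAt w w' t) :
    HasDerivAt (fun s => u s ⬝ᵥ M s *ᵥ w s)
      (u' ⬝ᵥ M t *ᵥ w t + u t ⬝ᵥ M' *ᵥ w t + u t ⬝ᵥ M t *ᵥ w') t := by
  have hu_i := hasDerivAt_pi.mp hu
  have hw_j := hasDerivAt_pi.mp hw
  have h : HasDerivAt (fun s => ∑ i, u s i * ∑ j, M s i j * w s j)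
      (∑ i, (u' i * ∑ j, M t i j * w t j + u t i * ∑ j, (M' i j * w t j + M t i j * w' j))) t :=
    HasDerivAt.fun_sum fun i _ =>
      (hu_i i).fun_mul (HasDerivAt.fun_sum fun j _ => (hM i j).fun_mul (hw_j j))
  convert h using 1
  · rfl
  · simp only [dotProduct, mulVec, Finset.sum_add_distrib, mul_add, add_assoc]

theorem fderiv_dotProduct_mulVec_apply {M : E → Matrix ι κ ℝ} {y : E}
    (hM : ∀ i j, DifferentiableAt ℝ (fun z => M z i j) y) (v : ι → ℝ) (w : κ → ℝ) (u : E) :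
    fderiv ℝ (fun z => v ⬝ᵥ M z *ᵥ w) y u
      = v ⬝ᵥ (Matrix.of fun i j => fderiv ℝ (fun z => M z i j) y u) *ᵥ w := by
  have hQ : HasFDerivAt (fun z => v ⬝ᵥ M z *ᵥ w)
      (∑ i, v i • ∑ j, w j • fderiv ℝ (fun z => M z i j) y) y := by
    simp only [dotProduct, mulVec]
    exact HasFDerivAt.fun_sum fun i _ => (HasFDerivAt.fun_sum fun j _ =>
      (hM i j).hasFDerivAt.mul_const (w j)).const_mul (v i)
  rw [hQ.fderiv]
  simp only [FunLike.coe_sum, FunLike.coe_smul, Finset.sum_apply, Pi.smul_apply, smul_eq_mul, dotProduct, mulVec, of_apply]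
  simp only [mul_comm]

theorem dotProduct_mulVec_comm_of_isSymm {A : Matrix ι ι ℝ} (hA : A.IsSymm) (u w : ι → ℝ) :
    u ⬝ᵥ A *ᵥ w = w ⬝ᵥ A *ᵥ u := by
  rw [dotProduct_mulVec, dotProduct_comm, ← hA.eq, vecMul_transpose, hA.eq]

end QuadraticForm

section GDS

variable {m : ℕ} (G : (Fin m → ℝ) → (Fin m → ℝ) → Matrix (Fin m) (Fin m) ℝ)

/-- `posDeriv G x v v` is the paper's `Ġˣ(x,ẋ)`. -/
noncomputable def posDeriv (x v u : Fin m → ℝ) : Matrix (Fin m) (Fin m) ℝ :=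
  Matrix.of fun i j => fderiv ℝ (fun y => G y v i j) x u

noncomputable def velDeriv (x v a : Fin m → ℝ) : Matrix (Fin m) (Fin m) ℝ :=
  Matrix.of fun i j => fderiv ℝ (fun w => G x w i j) v a

theorem dotProduct_XiG_mulVec (x v a : Fin m → ℝ) :
    v ⬝ᵥ XiG G x v *ᵥ a = (1 / 2) * (v ⬝ᵥ velDeriv G x v a *ᵥ v) := by
  simp only [dotProduct, mulVec, XiG, velDeriv, of_apply, fderiv_apply_eq_sum_pder,
    Finset.mul_sum, Finset.sum_mul]
  refine Finset.sum_congr rfl fun j _ => ?_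
  rw [Finset.sum_comm]
  refine Finset.sum_congr rfl fun i _ => Finset.sum_congr rfl fun k _ => ?_
  ring

theorem dotProduct_xiG {x v : Fin m → ℝ} (hG : ∀ i j, DifferentiableAt ℝ (fun y => G y v i j) x) :
    v ⬝ᵥ xiG G x v = (1 / 2) * (v ⬝ᵥ posDeriv G x v v *ᵥ v) := by
  have hxiG : xiG G x v
      = posDeriv G x v v *ᵥ v - (1 / 2 : ℝ) • fun k => pder (fun y => v ⬝ᵥ G y v *ᵥ v) x k := by
    ext i
    simp [xiG, posDeriv, mulVec, dotProduct, fderiv_apply_eq_sum_pder]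
  have hgrad : v ⬝ᵥ (fun k => pder (fun y => v ⬝ᵥ G y v *ᵥ v) x k)
      = v ⬝ᵥ posDeriv G x v v *ᵥ v := by
    rw [posDeriv, ← fderiv_dotProduct_mulVec_apply hG, fderiv_apply_eq_sum_pder]
    rfl
  rw [hxiG, dotProduct_sub, dotProduct_smul, hgrad, smul_eq_mul]
  ring

theorem dotProduct_inertia_eq (hGsym : ∀ x v, (G x v).IsSymm) {x v : Fin m → ℝ}
    (hG : ∀ i j, DifferentiableAt ℝ (fun y => G y v i j) x) (a : Fin m → ℝ) :
    v ⬝ᵥ ((G x v + XiG G x v) *ᵥ a + xiG G x v)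
      = (1 / 2) * (a ⬝ᵥ G x v *ᵥ v + v ⬝ᵥ (posDeriv G x v v + velDeriv G x v a) *ᵥ v
        + v ⬝ᵥ G x v *ᵥ a) := by
  rw [dotProduct_mulVec_comm_of_isSymm (hGsym x v) a v, add_mulVec, add_mulVec, dotProduct_add,
    dotProduct_add, dotProduct_add, dotProduct_XiG_mulVec, dotProduct_xiG G hG]
  ring

end GDS

theorem stmt7_general {m : ℕ}
    (G : (Fin m → ℝ) → (Fin m → ℝ) → Matrix (Fin m) (Fin m) ℝ)
    (hG : ∀ i j, ContDiff ℝ 1 (fun p : (Fin m → ℝ) × (Fin m → ℝ) => G p.1 p.2 i j))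
    (hGsym : ∀ x v, (G x v).IsSymm)
    (B : (Fin m → ℝ) → (Fin m → ℝ) → Matrix (Fin m) (Fin m) ℝ)
    (Φ : (Fin m → ℝ) → ℝ) (hΦ : ContDiff ℝ 1 Φ)
    (x : ℝ → Fin m → ℝ) (hx : ContDiff ℝ 2 x)
    -- the GDS equation of motion along the trajectory:
    (heq : ∀ t,
      (G (x t) (deriv x t) + XiG G (x t) (deriv x t)).mulVec (deriv (deriv x) t)
        + xiG G (x t) (deriv x t)
      = (fun i => -(pder Φ (x t) i)) - (B (x t) (deriv x t)).mulVec (deriv x t)) :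
    ∀ t, HasDerivAt
      (fun s => (1 / 2) * (deriv x s ⬝ᵥ (G (x s) (deriv x s)).mulVec (deriv x s)) + Φ (x s))
      (-(deriv x t ⬝ᵥ (B (x t) (deriv x t)).mulVec (deriv x t))) t := by
  intro t
  set v := deriv x t
  set a := deriv (deriv x) t
  have hxt : HasDerivAt x v t := (hx.differentiable two_ne_zero t).hasDerivAt
  have hvt : HasDerivAt (deriv x) a t := (hx.differentiable_deriv_two t).hasDerivAt
  have hGd : ∀ i j, Differentiable ℝ (fun p : (Fin m → ℝ) × (Fin m → ℝ) => G p.1 p.2 i j) :=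
    fun i j => (hG i j).differentiable one_ne_zero
  have hGt : ∀ i j, HasDerivAt (fun s => G (x s) (deriv x s) i j)
      ((posDeriv G (x t) v v + velDeriv G (x t) v a) i j) t :=
    fun i j => hasDerivAt_comp_prodMk (hGd i j _) hxt hvt
  have hΦt : HasDerivAt (fun s => Φ (x s)) (v ⬝ᵥ fun k => pder Φ (x t) k) t := by
    have h := (hΦ.differentiable one_ne_zero (x t)).hasFDerivAt.comp_hasDerivAt t hxt
    rwa [fderiv_apply_eq_sum_pder] at h
  refine (((hvt.dotProduct_mulVec hGt hvt).const_mul (1 / 2)).add hΦt).congr_deriv ?_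
  have hGx : ∀ i j, DifferentiableAt ℝ (fun y => G y v i j) (x t) :=
    fun i j => (hGd i j).comp (differentiable_id.prodMk (differentiable_const v)) _
  rw [← dotProduct_inertia_eq G hGsym hGx, ← dotProduct_add, heq t, ← dotProduct_neg]
  congr 1
  ext i
  simp only [Pi.add_apply, Pi.sub_apply, Pi.neg_apply]
  ring

theorem stmt7 {m : ℕ}
    (G : (Fin m → ℝ) → (Fin m → ℝ) → Matrix (Fin m) (Fin m) ℝ)
    (hG : ∀ i j, ContDiff ℝ 1 (fun p : (Fin m → ℝ) × (Fin m → ℝ) => G p.1 p.2 i j))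
    (hGsym : ∀ x v, (G x v).IsSymm)
    (B : (Fin m → ℝ) → (Fin m → ℝ) → Matrix (Fin m) (Fin m) ℝ)
    (hB : ∀ x v, (B x v).PosSemidef)
    (Φ : (Fin m → ℝ) → ℝ) (hΦ : ContDiff ℝ 1 Φ) (hΦlb : ∃ cΦ, ∀ y, cΦ ≤ Φ y)
    (x : ℝ → Fin m → ℝ) (hx : ContDiff ℝ 2 x)
    -- the GDS equation of motion along the trajectory:
    (heq : ∀ t,
      (G (x t) (deriv x t) + XiG G (x t) (deriv x t)).mulVec (deriv (deriv x) t)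
        + xiG G (x t) (deriv x t)
      = (fun i => -(pder Φ (x t) i)) - (B (x t) (deriv x t)).mulVec (deriv x t)) :
    ∀ t, HasDerivAt
      (fun s => (1 / 2) * (deriv x s ⬝ᵥ (G (x s) (deriv x s)).mulVec (deriv x s)) + Φ (x s))
      (-(deriv x t ⬝ᵥ (B (x t) (deriv x t)).mulVec (deriv x t))) t :=
  stmt7_general G hG hGsym B Φ hΦ x hx heq
end

section
/- Let D : ℝᵐ × ℝⁿ → ℝ^(n×n) be diagonal-valued with entries dᵢ(x, ẏᵢ) satisfying dᵢ ≥ 0 and ẏᵢ ∂_{ẏᵢ} dᵢ(x, ẏᵢ) ≥ 0, let L : ℝᵐ → ℝ^(n×m) be differentiable, let R : ℝᵐ → ℝ^(m×m) be PSD-valued, and set G(x,ẋ) = R(x) + L(x)ᵀ D(x, L(x)ẋ) L(x). Then the curvature correction Ξ_G(x,ẋ) = ½ Σᵢ ẋᵢ ∂_ẋ gᵢ(x,ẋ), where gᵢ is the i-th column of G, is symmetric positive semidefinite, and consequently the inertia M(x,ẋ) = G(x,ẋ) + Ξ_G(x,ẋ) satisfies vᵀM v ≥ vᵀGv for all v.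 -/
open Matrix BigOperators

theorem pder_const_add {m : ℕ} (c : ℝ) (f : (Fin m → ℝ) → ℝ) (x : Fin m → ℝ) (k : Fin m) :
    pder (fun w => c + f w) x k = pder f x k := by
  rw [pder, fderiv_const_add, pder]

namespace Matrix

variable {m n : ℕ} (A : Matrix (Fin n) (Fin m) ℝ)

theorem transpose_mul_diagonal_mul_apply (d : Fin n → ℝ) (j k : Fin m) :
    (Aᵀ * diagonal d * A) j k = ∑ a, A a j * d a * A a k := by
  rw [mul_apply]
  simp only [mul_diagonal, transpose_apply]

theorem posSemidef_transpose_mul_diagonal_mul {d : Fin n → ℝ} (hd : ∀ a, 0 ≤ d a) :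
    (Aᵀ * diagonal d * A).PosSemidef := by
  rw [← conjTranspose_eq_transpose_of_trivial]
  exact (posSemidef_diagonal_iff.mpr hd).conjTranspose_mul_mul_same A

noncomputable def mulVecApplyCLM (a : Fin n) : (Fin m → ℝ) →L[ℝ] ℝ :=
  (ContinuousLinearMap.proj a).comp (LinearMap.toContinuousLinearMap A.mulVecLin)

@[simp]
theorem mulVecApplyCLM_apply (a : Fin n) (w : Fin m → ℝ) : A.mulVecApplyCLM a w = (A *ᵥ w) a :=
  rfl

theorem hasFDerivAt_transpose_mul_diagonal_mul_apply (φ : Fin n → ℝ → ℝ)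
    (v : Fin m → ℝ) (hφ : ∀ a, DifferentiableAt ℝ (φ a) ((A *ᵥ v) a)) (j i : Fin m) :
    HasFDerivAt (fun w => (Aᵀ * diagonal (fun a => φ a ((A *ᵥ w) a)) * A) j i)
      (∑ a, (A a j * deriv (φ a) ((A *ᵥ v) a) * A a i) • A.mulVecApplyCLM a) v := by
  simp only [transpose_mul_diagonal_mul_apply]
  refine HasFDerivAt.fun_sum fun a _ => ?_
  have hφa : HasFDerivAt (fun w => φ a ((A *ᵥ w) a))
      (deriv (φ a) ((A *ᵥ v) a) • A.mulVecApplyCLM a) v :=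
    (hφ a).hasDerivAt.comp_hasFDerivAt v (A.mulVecApplyCLM a).hasFDerivAt
  have h := (hφa.const_mul (A a j)).mul_const (A a i)
  rwa [smul_smul, smul_smul, mul_rotate] at h

theorem pder_transpose_mul_diagonal_mul_apply (φ : Fin n → ℝ → ℝ)
    (v : Fin m → ℝ) (hφ : ∀ a, DifferentiableAt ℝ (φ a) ((A *ᵥ v) a)) (j i k : Fin m) :
    pder (fun w => (Aᵀ * diagonal (fun a => φ a ((A *ᵥ w) a)) * A) j i) v k
      = ∑ a, A a j * deriv (φ a) ((A *ᵥ v) a) * A a i * A a k := by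
  rw [pder, (A.hasFDerivAt_transpose_mul_diagonal_mul_apply φ v hφ j i).fderiv]
  simp

end Matrix

theorem XiG_add_transpose_mul_diagonal_mul {m n : ℕ} (d : Fin n → (Fin m → ℝ) → ℝ → ℝ)
    (L : (Fin m → ℝ) → Matrix (Fin n) (Fin m) ℝ) (R : (Fin m → ℝ) → Matrix (Fin m) (Fin m) ℝ)
    (x v : Fin m → ℝ) (hd : ∀ a, DifferentiableAt ℝ (d a x) ((L x *ᵥ v) a)) :
    XiG (fun y w => R y + (L y)ᵀ * diagonal (fun a => d a y ((L y *ᵥ w) a)) * L y) x v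
      = (L x)ᵀ * diagonal (fun a => (1 / 2) * ((L x *ᵥ v) a * deriv (d a x) ((L x *ᵥ v) a)))
          * L x := by
  ext j k
  simp only [XiG, of_apply, Matrix.add_apply, pder_const_add,
    (L x).pder_transpose_mul_diagonal_mul_apply (d · x) v hd]
  simp only [transpose_mul_diagonal_mul_apply, mulVec, dotProduct, Finset.mul_sum, Finset.sum_mul]
  rw [Finset.sum_comm]
  refine Finset.sum_congr rfl fun a _ => Finset.sum_congr rfl fun b _ => ?_
  ring

theorem dotProduct_mulVec_le_add_of_posSemidef {m : Type*} [Fintype m] {M N : Matrix m m ℝ}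
    (hN : N.PosSemidef) (u : m → ℝ) : u ⬝ᵥ (M *ᵥ u) ≤ u ⬝ᵥ ((M + N) *ᵥ u) := by
  rw [add_mulVec, dotProduct_add, le_add_iff_nonneg_right]
  simpa using hN.dotProduct_mulVec_nonneg u

theorem stmt11_general {m n : ℕ}
    (dfun : Fin n → (Fin m → ℝ) → ℝ → ℝ)
    (hd_diff : ∀ i x, Differentiable ℝ (dfun i x))
    (hd_mono : ∀ i x s, 0 ≤ s * deriv (dfun i x) s)
    (L : (Fin m → ℝ) → Matrix (Fin n) (Fin m) ℝ)
    (R : (Fin m → ℝ) → Matrix (Fin m) (Fin m) ℝ)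
    (x v : Fin m → ℝ) :
    let G : (Fin m → ℝ) → (Fin m → ℝ) → Matrix (Fin m) (Fin m) ℝ := fun y w =>
      R y + (L y)ᵀ * Matrix.diagonal (fun i => dfun i y ((L y).mulVec w i)) * L y
    (XiG G x v).PosSemidef ∧
    (∀ u : Fin m → ℝ, u ⬝ᵥ (G x v).mulVec u ≤ u ⬝ᵥ ((G x v + XiG G x v).mulVec u)) := by
  intro G
  have hXi : (XiG G x v).PosSemidef := by
    rw [XiG_add_transpose_mul_diagonal_mul dfun L R x v fun a => hd_diff a x _]
    exact (L x).posSemidef_transpose_mul_diagonal_mul fun a =>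
      mul_nonneg (by norm_num) (hd_mono a x _)
  exact ⟨hXi, dotProduct_mulVec_le_add_of_posSemidef hXi⟩

theorem stmt11 {m n : ℕ}
    (dfun : Fin n → (Fin m → ℝ) → ℝ → ℝ)
    (hd_diff : ∀ i x, Differentiable ℝ (dfun i x))
    (hd_nonneg : ∀ i x s, 0 ≤ dfun i x s)
    (hd_mono : ∀ i x s, 0 ≤ s * deriv (dfun i x) s)
    (L : (Fin m → ℝ) → Matrix (Fin n) (Fin m) ℝ)
    (hL : ∀ i j, Differentiable ℝ fun x => L x i j)
    (R : (Fin m → ℝ) → Matrix (Fin m) (Fin m) ℝ)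
    (hR : ∀ x, (R x).PosSemidef)
    (x v : Fin m → ℝ) :
    let G : (Fin m → ℝ) → (Fin m → ℝ) → Matrix (Fin m) (Fin m) ℝ := fun y w =>
      R y + (L y)ᵀ * Matrix.diagonal (fun i => dfun i y ((L y).mulVec w i)) * L y
    (XiG G x v).PosSemidef ∧
    (∀ u : Fin m → ℝ, u ⬝ᵥ (G x v).mulVec u ≤ u ⬝ᵥ ((G x v + XiG G x v).mulVec u)) :=
  stmt11_general dfun hd_diff hd_mono L R x v
end
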